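/- Let (m_1,r_1),…,(m_n,r_n) with m_i ∈ ℝ², r_i > 0, and let H_v : S¹ → ℕ be the sum of the signal functions. Let G : S¹ → ℕ be properly upper semicontinuous with {x ∈ S¹ : H_v(x) ≠ G(x)} finite. Then the number of indices i ∈ {1,…,n} such that ∂h_{(m_i,r_i)} has exactly 2 elements is at least G* − G_* + τ(G), where G* = max G and G_* = min G. -/

import Mathlib

noncomputable section

open scoped BigOperators
open Classical

/-- The unit circle `S¹` in the plane (modeled as `ℂ ≅ ℝ²` with the Euclidean norm). -/
def S1 : Set ℂ := {x : ℂ | ‖x‖ = 1}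

/-- The signal function `h_{(m,r)}`: indicator of the closed disk of center `m`, radius `r`. -/
def signal (m : ℂ) (r : ℝ) (x : ℂ) : ℕ := if ‖x - m‖ ≤ r then 1 else 0

/-- The boundary trace `∂h_{(m,r)} = {x ∈ S¹ : ‖x − m‖ = r}`. -/
def bTrace (m : ℂ) (r : ℝ) : Set ℂ := {x : ℂ | ‖x‖ = 1 ∧ ‖x - m‖ = r}

/-- The sum `H_v` of the signal functions of the disk data `v = ((m_i, r_i))_{i<n}`. -/
def Hsum {n : ℕ} (v : Fin n → ℂ × ℝ) (x : ℂ) : ℕ := ∑ i, signal (v i).1 (v i).2 x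

/-- Rotation of the plane by angle `t` about the origin. -/
def rot (t : ℝ) (x : ℂ) : ℂ := Complex.exp (t * Complex.I) * x

/-- `H(x⁺) = a`: `H` equals `a` just after `x` (counterclockwise). -/
def rightVal (H : ℂ → ℕ) (x : ℂ) (a : ℕ) : Prop :=
  ∃ δ > (0 : ℝ), ∀ t : ℝ, 0 < t → t < δ → H (rot t x) = a

/-- `H(x⁻) = b`: `H` equals `b` just before `x`. -/
def leftVal (H : ℂ → ℕ) (x : ℂ) (b : ℕ) : Prop :=
  ∃ δ > (0 : ℝ), ∀ t : ℝ, -δ < t → t < 0 → H (rot t x) = b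

/-- `H` is properly upper semicontinuous on `S¹`: at each point both one-sided limits
exist and the value equals their maximum. -/
def ProperlyUSC (H : ℂ → ℕ) : Prop :=
  ∀ x ∈ S1, ∃ a b : ℕ, rightVal H x a ∧ leftVal H x b ∧ H x = max a b

/-- `H* = max_{S¹} H`. -/
def maxOnS1 (H : ℂ → ℕ) : ℕ := sSup (H '' S1)

/-- `H_* = min_{S¹} H`. -/
def minOnS1 (H : ℂ → ℕ) : ℕ := sInf (H '' S1)

/-- The superlevel set `{x ∈ S¹ : H(x) ≥ k}`. -/
def superlevel (H : ℂ → ℕ) (k : ℕ) : Set ℂ := {x ∈ S1 | k ≤ H x}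

/-- Number of connected components of a subset of the plane. -/
def numCC (A : Set ℂ) : ℕ := Nat.card (ConnectedComponents ↥A)

/-- `τ(H) = Σ_{k=H_*+1}^{H*} (c_k(H) − 1)`. -/
def tau (H : ℂ → ℕ) : ℕ :=
  ∑ k ∈ Finset.Icc (minOnS1 H + 1) (maxOnS1 H), (numCC (superlevel H k) - 1)

/-- `ρ` for the degrees-of-freedom count. -/
def rho (m : ℂ) (r : ℝ) : ℕ :=
  if bTrace m r = ∅ then 3
  else if (bTrace m r).ncard = 1 ∨ (bTrace m r).ncard = 2 then 1
  else 0

/-- `N`-degrees of freedom of a decomposition with `n ≤ N` signals. -/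
def DoF (N : ℕ) {n : ℕ} (v : Fin n → ℂ × ℝ) : ℕ :=
  3 * (N - n) + ∑ i, rho (v i).1 (v i).2

/-!
On the orbit `t ↦ e^{it} x`, a signal is `1` exactly where `Re (e^{it} x m̄) ≥ (1 + |m|² - r²) / 2`,
a condition on an analytic function of `t`. Hence every signal has one-sided values at every point
of `S¹`, and it jumps from `1` down to `0` (counterclockwise) at no more than one point, which
exists only if its boundary trace has exactly two points. Since `H_v = G` off a finite set, the
one-sided values of `G` are the sums of those of the signals, so wherever `G` drops by `d` at
least `d` signals jump down there.

Conversely, for `G_* < k ≤ G*` every component of the closed set `{G ≥ k}` ends, counterclockwise,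
at a point where `G` drops below `k`: otherwise small positive rotations would carry the component
into itself and it would cover the whole circle. Summing over `k`,
`G* - G_* + τ(G) = Σ_k c_k(G)` is at most the total drop of `G`, hence at most the number of
signals with a two-point trace.
-/

open Filter Topology Set ComplexConjugate

lemma IsPreconnected.forall_le_or_forall_lt {X α : Type*} [TopologicalSpace X] [LinearOrder α]
    [TopologicalSpace α] [OrderClosedTopology α] {s : Set X} (hs : IsPreconnected s) {f : X → α}
    (hf : ContinuousOn f s) {c : α} (hc : ∀ t ∈ s, f t ≠ c) :
    (∀ t ∈ s, c ≤ f t) ∨ ∀ t ∈ s, f t < c := by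
  by_contra! h
  obtain ⟨⟨a, ha, hfa⟩, ⟨b, hb, hfb⟩⟩ := h
  obtain ⟨t, ht, hft⟩ := hs.intermediate_value ha hb hf ⟨hfa.le, hfb⟩
  exact hc t ht hft

lemma AnalyticAt.eventually_le_or_eventually_lt_nhdsGT {f : ℝ → ℝ} {x : ℝ}
    (hf : AnalyticAt ℝ f x) (c : ℝ) :
    (∀ᶠ t in 𝓝[>] x, c ≤ f t) ∨ ∀ᶠ t in 𝓝[>] x, f t < c := by
  have hfc : AnalyticAt ℝ (fun t => f t - c) x := by fun_prop
  -- isolated zeros: unless `f = c` near `x`, `f ≠ c` on some `(x, u)`, so `f - c` keeps a sign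
  rcases hfc.eventually_eq_zero_or_eventually_ne_zero with h | h
  · exact .inl <| (h.filter_mono nhdsWithin_le_nhds).mono fun t ht => (sub_eq_zero.1 ht).ge
  have hgood : ∀ᶠ t in 𝓝[>] x, f t ≠ c ∧ ContinuousAt f t :=
    ((h.filter_mono (nhdsWithin_mono _ fun _ ht => ne_of_gt ht)).and
      ((hf.eventually_analyticAt.filter_mono nhdsWithin_le_nhds).mono
        fun _ ht => ht.continuousAt)).mono fun t ht => ⟨sub_ne_zero.1 ht.1, ht.2⟩
  obtain ⟨u, hu, hsub⟩ := mem_nhdsGT_iff_exists_Ioo_subset.1 hgood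
  have hIoo : Ioo x u ∈ 𝓝[>] x := Ioo_mem_nhdsGT hu
  rcases isPreconnected_Ioo.forall_le_or_forall_lt
    (fun t ht => (hsub ht).2.continuousWithinAt) (fun t ht => (hsub ht).1) with h | h
  exacts [.inl (mem_of_superset hIoo h), .inr (mem_of_superset hIoo h)]

lemma AnalyticAt.eventually_le_or_eventually_lt_nhdsLT {f : ℝ → ℝ} {x : ℝ}
    (hf : AnalyticAt ℝ f x) (c : ℝ) :
    (∀ᶠ t in 𝓝[<] x, c ≤ f t) ∨ ∀ᶠ t in 𝓝[<] x, f t < c := by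
  have hneg : AnalyticAt ℝ (fun t => f (-t)) (-x) := by
    apply AnalyticAt.comp (by rwa [neg_neg]) (by fun_prop)
  rcases hneg.eventually_le_or_eventually_lt_nhdsGT c with h | h
  · exact .inl (by simpa using tendsto_neg_nhdsLT.eventually h)
  · exact .inr (by simpa using tendsto_neg_nhdsLT.eventually h)

lemma Complex.eq_or_eq_conj_of_norm_eq_of_re_eq {z w : ℂ} (hn : ‖z‖ = ‖w‖) (hre : z.re = w.re) :
    z = w ∨ z = conj w := by
  have hsq : z.im ^ 2 = w.im ^ 2 := by
    have h := congrArg (· ^ 2) hn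
    simp only [Complex.sq_norm, Complex.normSq_apply, hre] at h
    linarith
  rcases sq_eq_sq_iff_eq_or_eq_neg.1 hsq with h | h
  · exact .inl (Complex.ext hre h)
  · exact .inr (Complex.ext (by simp [hre]) (by simp [h]))

lemma isClosed_connectedComponentIn {X : Type*} [TopologicalSpace X] {F : Set X}
    (hF : IsClosed F) (x : X) : IsClosed (connectedComponentIn F x) := by
  by_cases hx : x ∈ F
  · refine closure_subset_iff_isClosed.1 <|
      isPreconnected_connectedComponentIn.closure.subset_connectedComponentIn
        (subset_closure (mem_connectedComponentIn hx))
        (closure_minimal (connectedComponentIn_subset F x) hF)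
  · rw [connectedComponentIn_eq_empty hx]
    exact isClosed_empty

lemma card_connectedComponents_le {X : Type*} [TopologicalSpace X] {A : Set X} (T : Finset X)
    (hT : ∀ x ∈ A, ∃ y ∈ T, y ∈ connectedComponentIn A x) :
    Nat.card (ConnectedComponents A) ≤ T.card := by
  have : Finite ↥(A ∩ T) := (T.finite_toSet.subset inter_subset_right).to_subtype
  calc Nat.card (ConnectedComponents A)
      ≤ Nat.card ↥(A ∩ T) := by
        refine Nat.card_le_card_of_surjective (fun y => ConnectedComponents.mk ⟨y, y.2.1⟩) ?_
        rintro ⟨x⟩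
        obtain ⟨y, hyT, hyx⟩ := hT x x.2
        rw [connectedComponentIn_eq_image x.2] at hyx
        obtain ⟨y, hy, rfl⟩ := hyx
        exact ⟨⟨y, y.2, hyT⟩, ConnectedComponents.coe_eq_coe'.2 hy⟩
    _ ≤ T.card := by
        rw [Nat.card_coe_set_eq, ← Set.ncard_coe_finset]
        exact Set.ncard_le_ncard inter_subset_right T.finite_toSet

lemma Finset.sum_le_sum_add_card_filter {ι : Type*} (s : Finset ι) {f g : ι → ℕ}
    (hg : ∀ i ∈ s, g i ≤ 1) :
    ∑ i ∈ s, g i ≤ ∑ i ∈ s, f i + (s.filter fun i => g i = 1 ∧ f i = 0).card := by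
  rw [Finset.card_filter, ← Finset.sum_add_distrib]
  refine Finset.sum_le_sum fun i hi => ?_
  have := hg i hi
  split_ifs with h <;> omega

lemma S1_eq_sphere : S1 = Metric.sphere 0 1 := by
  ext x
  simp [S1]

lemma isCompact_S1 : IsCompact S1 := S1_eq_sphere ▸ isCompact_sphere 0 1

lemma one_mem_S1 : (1 : ℂ) ∈ S1 := by
  simp [S1]

lemma exists_eq_minOnS1 (G : ℂ → ℕ) : ∃ x ∈ S1, G x = minOnS1 G :=
  Nat.sInf_mem (nonempty_of_mem (mem_image_of_mem G one_mem_S1))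

lemma ne_zero_of_mem_S1 {x : ℂ} (hx : x ∈ S1) : x ≠ 0 := by
  rintro rfl
  simp [S1] at hx

@[simp]
lemma rot_zero (x : ℂ) : rot 0 x = x := by
  simp [rot]

lemma rot_rot (s t : ℝ) (x : ℂ) : rot s (rot t x) = rot (t + s) x := by
  simp only [rot, Complex.ofReal_add, add_mul, Complex.exp_add]
  ring

lemma rot_add_two_pi (t : ℝ) (x : ℂ) : rot (t + 2 * Real.pi) x = rot t x := by
  simp only [rot, Complex.ofReal_add, add_mul, Complex.exp_add, Complex.ofReal_mul,
    Complex.ofReal_ofNat, Complex.exp_two_pi_mul_I, mul_one]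

@[simp]
lemma norm_rot (t : ℝ) (x : ℂ) : ‖rot t x‖ = ‖x‖ := by
  simp [rot, Complex.norm_exp_ofReal_mul_I]

lemma rot_mem_S1 {x : ℂ} (hx : x ∈ S1) (t : ℝ) : rot t x ∈ S1 :=
  (norm_rot t x).trans hx

lemma continuous_rot (x : ℂ) : Continuous fun t : ℝ => rot t x := by
  unfold rot
  fun_prop

lemma rot_arg_div {x z : ℂ} (hx : x ≠ 0) (hz : ‖z‖ = ‖x‖) : rot (z / x).arg x = z := by
  have hzx : ‖z / x‖ = 1 := by rw [norm_div, hz, div_self (norm_ne_zero_iff.2 hx)]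
  have h := Complex.norm_mul_exp_arg_mul_I (z / x)
  rw [hzx, Complex.ofReal_one, one_mul] at h
  rw [rot, h, div_mul_cancel₀ _ hx]

lemma exists_rot_eq {x z : ℂ} (hx : x ≠ 0) (hz : ‖z‖ = ‖x‖) :
    ∃ t ∈ Icc 0 (2 * Real.pi), rot t x = z := by
  have h1 := Complex.neg_pi_lt_arg (z / x)
  have h2 := Complex.arg_le_pi (z / x)
  rcases le_or_gt 0 (z / x).arg with h | h
  · exact ⟨_, ⟨h, by linarith [Real.pi_pos]⟩, rot_arg_div hx hz⟩
  · exact ⟨(z / x).arg + 2 * Real.pi, ⟨by linarith, by linarith⟩,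
      by rw [rot_add_two_pi, rot_arg_div hx hz]⟩

lemma eventually_exists_rot_eq {x : ℂ} (hx : x ≠ 0) {δ : ℝ} (hδ : 0 < δ) :
    ∀ᶠ z in 𝓝 x, ‖z‖ = ‖x‖ → ∃ t ∈ Ioo (-δ) δ, rot t x = z := by
  have harg : ContinuousAt (fun z => (z / x).arg) x :=
    (Complex.continuousAt_arg (by simp [hx])).comp (continuousAt_id.div_const x)
  have hδ' : Ioo (-δ) δ ∈ 𝓝 ((x / x).arg) := by
    rw [div_self hx, Complex.arg_one]
    exact Ioo_mem_nhds (neg_neg_of_pos hδ) hδ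
  filter_upwards [harg hδ'] with z hz hzx
  exact ⟨_, hz, rot_arg_div hx hzx⟩

lemma eventually_rot_notMem {x : ℂ} (hx : x ≠ 0) {B : Set ℂ} (hB : B.Finite) :
    ∀ᶠ t in 𝓝[≠] 0, rot t x ∉ B := by
  have hperiod : Ioo (-(2 * Real.pi)) (2 * Real.pi) ∈ 𝓝 (0 : ℝ) :=
    Ioo_mem_nhds (by linarith [Real.pi_pos]) (by linarith [Real.pi_pos])
  have hb : ∀ b ∈ B, ∀ᶠ t in 𝓝[≠] 0, rot t x ≠ b := by
    intro b _
    by_cases hbx : b = x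
    · subst hbx
      filter_upwards [self_mem_nhdsWithin, nhdsWithin_le_nhds hperiod] with t ht0 ht hrot
      have hexp : Complex.exp (t * Complex.I) = 1 := by
        simpa [rot, hx] using congrArg (· / b) hrot
      have hcos : Real.cos t = 1 := by
        simpa using congrArg Complex.re hexp
      exact ht0 ((Real.cos_eq_one_iff_of_lt_of_lt ht.1 ht.2).1 hcos)
    · exact nhdsWithin_le_nhds <|
        (continuous_rot x).continuousAt.eventually_ne (by simpa using Ne.symm hbx)
  filter_upwards [(eventually_all_finite hB).2 hb] with t ht hmem
  exact ht _ hmem rfl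

lemma eventually_rot_mem_connectedComponentIn {A : Set ℂ} {y : ℂ} (hy : y ∈ A)
    (h : ∀ᶠ t in 𝓝[>] 0, rot t y ∈ A) :
    ∀ᶠ t in 𝓝[>] 0, rot t y ∈ connectedComponentIn A y := by
  obtain ⟨u, hu, hsub⟩ := mem_nhdsGT_iff_exists_Ioo_subset.1 h
  have harc : (fun t => rot t y) '' Ico 0 u ⊆ connectedComponentIn A y := by
    refine (isPreconnected_Ico.image _ (continuous_rot y).continuousOn).subset_connectedComponentIn
      ⟨0, left_mem_Ico.2 hu, rot_zero y⟩ ?_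
    rintro _ ⟨t, ht, rfl⟩
    rcases ht.1.eq_or_lt with rfl | ht0
    · simpa using hy
    · exact hsub ⟨ht0, ht.2⟩
  exact mem_of_superset (Ioo_mem_nhdsGT hu) fun t ht => harc ⟨t, Ioo_subset_Ico_self ht, rfl⟩

lemma S1_subset_of_forall_eventually_rot_mem {C : Set ℂ} (hC : IsClosed C) {x : ℂ}
    (hx : x ∈ C) (hxS : x ∈ S1) (h : ∀ y ∈ C, ∀ᶠ t in 𝓝[>] 0, rot t y ∈ C) : S1 ⊆ C := by
  have hIcc : Icc 0 (2 * Real.pi) ⊆ (fun t => rot t x) ⁻¹' C := by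
    refine IsClosed.Icc_subset_of_forall_mem_nhdsWithin
      ((hC.preimage (continuous_rot x)).inter isClosed_Icc) (by simpa using hx) ?_
    rintro t ⟨ht, -⟩
    rw [← add_zero t, ← map_add_left_nhdsGT, Filter.mem_map]
    filter_upwards [h _ ht] with s hs
    rwa [rot_rot] at hs
  intro z hz
  obtain ⟨t, ht, rfl⟩ := exists_rot_eq (ne_zero_of_mem_S1 hxS) (hz.trans hxS.symm)
  exact hIcc ht

section OneSidedLimits

/-- The value `H (rot t x)` eventually takes as `t → 0` along `l`; `0` if there is none. -/
def rotLim (l : Filter ℝ) (H : ℂ → ℕ) (x : ℂ) : ℕ :=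
  if h : ∃ a, ∀ᶠ t in l, H (rot t x) = a then h.choose else 0

variable {l : Filter ℝ} {H G : ℂ → ℕ} {x : ℂ} {a : ℕ}

lemma eventually_eq_rotLim (h : ∃ a, ∀ᶠ t in l, H (rot t x) = a) :
    ∀ᶠ t in l, H (rot t x) = rotLim l H x := by
  rw [rotLim, dif_pos h]
  exact h.choose_spec

lemma rotLim_eq [l.NeBot] (h : ∀ᶠ t in l, H (rot t x) = a) : rotLim l H x = a := by
  obtain ⟨t, ht, ht'⟩ := ((eventually_eq_rotLim ⟨a, h⟩).and h).exists
  rw [← ht, ht']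

lemma rotLim_le [l.NeBot] {N : ℕ} (hH : ∀ y, H y ≤ N) : rotLim l H x ≤ N := by
  unfold rotLim
  split_ifs with h
  · obtain ⟨t, ht⟩ := h.choose_spec.exists
    exact ht ▸ hH _
  · exact Nat.zero_le N

lemma rightVal_iff : rightVal H x a ↔ ∀ᶠ t in 𝓝[>] 0, H (rot t x) = a := by
  rw [Filter.Eventually, mem_nhdsGT_iff_exists_Ioo_subset]
  exact ⟨fun ⟨δ, hδ, h⟩ => ⟨δ, hδ, fun t ht => h t ht.1 ht.2⟩,
    fun ⟨δ, hδ, h⟩ => ⟨δ, hδ, fun t ht0 htδ => h ⟨ht0, htδ⟩⟩⟩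

lemma leftVal_iff : leftVal H x a ↔ ∀ᶠ t in 𝓝[<] 0, H (rot t x) = a := by
  rw [Filter.Eventually, mem_nhdsLT_iff_exists_Ioo_subset]
  exact ⟨fun ⟨δ, hδ, h⟩ => ⟨-δ, neg_lt_zero.2 hδ, fun t ht => h t ht.1 ht.2⟩,
    fun ⟨u, hu, h⟩ => ⟨-u, neg_pos.2 hu, fun t ht htu => h ⟨by linarith, htu⟩⟩⟩

lemma ProperlyUSC.eq_max_rotLim (hG : ProperlyUSC G) (hx : x ∈ S1) :
    G x = max (rotLim (𝓝[>] 0) G x) (rotLim (𝓝[<] 0) G x) := by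
  obtain ⟨a, b, ha, hb, hab⟩ := hG x hx
  rw [rotLim_eq (rightVal_iff.1 ha), rotLim_eq (leftVal_iff.1 hb), hab]

lemma rotLim_eq_of_finite_ne (hfin : {y ∈ S1 | H y ≠ G y}.Finite) (hx : x ∈ S1)
    [l.NeBot] (hl : l ≤ 𝓝[≠] 0) (h : ∀ᶠ t in l, H (rot t x) = a) : rotLim l G x = a := by
  refine rotLim_eq ?_
  filter_upwards [h, hl (eventually_rot_notMem (ne_zero_of_mem_S1 hx) hfin)] with t ht hne
  by_contra hG
  exact hne ⟨rot_mem_S1 hx t, ht ▸ Ne.symm hG⟩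

lemma eventually_Hsum_rot_eq {n : ℕ} {v : Fin n → ℂ × ℝ}
    (h : ∀ i, ∃ a, ∀ᶠ t in l, signal (v i).1 (v i).2 (rot t x) = a) :
    ∀ᶠ t in l, Hsum v (rot t x) = ∑ i, rotLim l (signal (v i).1 (v i).2) x := by
  filter_upwards [eventually_all.2 fun i => eventually_eq_rotLim (h i)] with t ht
  exact Finset.sum_congr rfl fun i _ => ht i

end OneSidedLimits

section Signals

def diskLevel (m : ℂ) (r : ℝ) : ℝ := (1 + ‖m‖ ^ 2 - r ^ 2) / 2

lemma signal_le_one (m : ℂ) (r : ℝ) (x : ℂ) : signal m r x ≤ 1 := by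
  unfold signal
  split_ifs <;> simp

lemma re_rot_mul_conj (t : ℝ) (x m : ℂ) :
    (rot t x * conj m).re = (x * conj m).re * Real.cos t - (x * conj m).im * Real.sin t := by
  rw [rot, mul_assoc, Complex.exp_mul_I, ← Complex.ofReal_cos, ← Complex.ofReal_sin]
  simp only [Complex.add_re, Complex.mul_re, Complex.ofReal_re, Complex.ofReal_im,
    Complex.add_im, Complex.mul_im, Complex.I_re, Complex.I_im]
  ring

variable {m x y : ℂ} {r : ℝ}

lemma norm_sub_sq_of_mem_S1 (hx : x ∈ S1) :
    ‖x - m‖ ^ 2 = 1 + ‖m‖ ^ 2 - 2 * (x * conj m).re := by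
  rw [Complex.sq_norm, Complex.sq_norm, Complex.normSq_sub, ← Complex.sq_norm x,
    show ‖x‖ = 1 from hx, one_pow]

lemma norm_sub_le_iff_diskLevel_le (hr : 0 ≤ r) (hx : x ∈ S1) :
    ‖x - m‖ ≤ r ↔ diskLevel m r ≤ (x * conj m).re := by
  rw [← sq_le_sq₀ (norm_nonneg _) hr, norm_sub_sq_of_mem_S1 hx, diskLevel]
  constructor <;> intro h <;> linarith

lemma signal_eq_ite (hr : 0 ≤ r) (hx : x ∈ S1) :
    signal m r x = if diskLevel m r ≤ (x * conj m).re then 1 else 0 := by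
  simp only [signal, norm_sub_le_iff_diskLevel_le hr hx]

lemma mem_bTrace_iff (hr : 0 ≤ r) :
    x ∈ bTrace m r ↔ x ∈ S1 ∧ (x * conj m).re = diskLevel m r := by
  refine and_congr_right fun hx => ?_
  rw [← sq_eq_sq₀ (norm_nonneg _) hr, norm_sub_sq_of_mem_S1 hx, diskLevel]
  constructor <;> intro h <;> linarith

lemma norm_mul_conj_of_mem_S1 (hx : x ∈ S1) : ‖x * conj m‖ = ‖m‖ := by
  rw [norm_mul, Complex.norm_conj, show ‖x‖ = 1 from hx, one_mul]

lemma exists_eventually_signal_rot_eq (hr : 0 ≤ r) (hx : x ∈ S1) {l : Filter ℝ}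
    (hl : l = 𝓝[>] 0 ∨ l = 𝓝[<] 0) : ∃ a, ∀ᶠ t in l, signal m r (rot t x) = a := by
  set w := x * conj m
  have hsig (t : ℝ) : signal m r (rot t x) =
      if diskLevel m r ≤ w.re * Real.cos t - w.im * Real.sin t then 1 else 0 := by
    rw [signal_eq_ite hr (rot_mem_S1 hx t), re_rot_mul_conj]
  have hφ : AnalyticAt ℝ (fun t => w.re * Real.cos t - w.im * Real.sin t) 0 := by fun_prop
  have h : (∀ᶠ t in l, diskLevel m r ≤ w.re * Real.cos t - w.im * Real.sin t) ∨
      ∀ᶠ t in l, w.re * Real.cos t - w.im * Real.sin t < diskLevel m r := by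
    rcases hl with rfl | rfl
    exacts [hφ.eventually_le_or_eventually_lt_nhdsGT _, hφ.eventually_le_or_eventually_lt_nhdsLT _]
  rcases h with h | h
  · exact ⟨1, h.mono fun t ht => by rw [hsig, if_pos ht]⟩
  · exact ⟨0, h.mono fun t ht => by rw [hsig, if_neg ht.not_ge]⟩

lemma re_eq_and_im_pos_of_downJump {w : ℂ} {c : ℝ}
    (hl : ∀ᶠ t in 𝓝[<] 0, c ≤ w.re * Real.cos t - w.im * Real.sin t)
    (hr : ∀ᶠ t in 𝓝[>] 0, w.re * Real.cos t - w.im * Real.sin t < c) :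
    w.re = c ∧ 0 < w.im := by
  have hφ (l : Filter ℝ) (hl : l ≤ 𝓝 0) :
      Tendsto (fun t => w.re * Real.cos t - w.im * Real.sin t) l (𝓝 w.re) := by
    have h : Continuous fun t : ℝ => w.re * Real.cos t - w.im * Real.sin t := by fun_prop
    simpa using (h.tendsto 0).mono_left hl
  refine ⟨le_antisymm (le_of_tendsto (hφ _ nhdsWithin_le_nhds) (hr.mono fun _ ht => ht.le))
    (ge_of_tendsto (hφ _ nhdsWithin_le_nhds) hl), ?_⟩
  -- the values at `-t` and `t` differ by `2 w.im sin t`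
  have hl' : ∀ᶠ t in 𝓝[>] 0, c ≤ w.re * Real.cos t + w.im * Real.sin t := by
    have h := (tendsto_neg_nhdsGT_neg (a := (0 : ℝ))).eventually hl
    rw [neg_zero] at h
    filter_upwards [h] with t ht
    simpa [Real.cos_neg, Real.sin_neg] using ht
  have hπ : ∀ᶠ t in 𝓝[>] (0 : ℝ), t < Real.pi := nhdsWithin_le_nhds (Iio_mem_nhds Real.pi_pos)
  obtain ⟨t, ht0, htπ, hlt, hge⟩ :=
    (eventually_mem_nhdsWithin.and (hπ.and (hr.and hl'))).exists
  have hsin := Real.sin_pos_of_pos_of_lt_pi ht0 htπ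
  exact pos_of_mul_pos_left (by linarith : 0 < w.im * Real.sin t) hsin.le

lemma ncard_bTrace_eq_two (hr : 0 ≤ r) (hy : y ∈ bTrace m r) (him : (y * conj m).im ≠ 0) :
    (bTrace m r).ncard = 2 := by
  obtain ⟨hyS, hyre⟩ := (mem_bTrace_iff hr).1 hy
  have hm : conj m ≠ 0 := by
    rintro h
    simp [h] at him
  -- the second point is the mirror image of `y` in the line `ℝ m`
  set y' := conj y * m / conj m
  have hy' : y' * conj m = conj (y * conj m) := by
    simp [y', div_mul_cancel₀ _ hm]
  refine Set.ncard_eq_two.2 ⟨y, y', fun h => him ?_, Set.ext fun x => ⟨fun hx => ?_, ?_⟩⟩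
  · rw [← Complex.conj_eq_iff_im, ← hy', ← h]
  · obtain ⟨hxS, hxre⟩ := (mem_bTrace_iff hr).1 hx
    rcases Complex.eq_or_eq_conj_of_norm_eq_of_re_eq
      (by rw [norm_mul_conj_of_mem_S1 hxS, norm_mul_conj_of_mem_S1 hyS])
      (hxre.trans hyre.symm) with h | h
    · exact .inl (mul_right_cancel₀ hm h)
    · exact .inr (mul_right_cancel₀ hm (h.trans hy'.symm))
  · rintro (rfl | rfl)
    · exact hy
    refine (mem_bTrace_iff hr).2 ⟨?_, by rw [hy', Complex.conj_re, hyre]⟩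
    have hy'S : ‖y' * conj m‖ = ‖m‖ := by
      rw [hy', Complex.norm_conj, norm_mul_conj_of_mem_S1 hyS]
    rw [norm_mul, Complex.norm_conj] at hy'S
    exact (mul_eq_right₀ (norm_ne_zero_iff.2 (by simpa using hm))).1 hy'S

def downJumps (m : ℂ) (r : ℝ) : Set ℂ :=
  {y ∈ S1 | rotLim (𝓝[<] 0) (signal m r) y = 1 ∧ rotLim (𝓝[>] 0) (signal m r) y = 0}

lemma re_eq_and_im_pos_of_mem_downJumps (hr : 0 ≤ r) (hy : y ∈ downJumps m r) :
    (y * conj m).re = diskLevel m r ∧ 0 < (y * conj m).im := by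
  obtain ⟨hyS, h1, h0⟩ := hy
  apply re_eq_and_im_pos_of_downJump
  · filter_upwards [eventually_eq_rotLim (exists_eventually_signal_rot_eq hr hyS (.inr rfl))]
      with t ht
    rw [h1, signal_eq_ite hr (rot_mem_S1 hyS t), re_rot_mul_conj] at ht
    by_contra hc
    rw [if_neg hc] at ht
    exact zero_ne_one ht
  · filter_upwards [eventually_eq_rotLim (exists_eventually_signal_rot_eq hr hyS (.inl rfl))]
      with t ht
    rw [h0, signal_eq_ite hr (rot_mem_S1 hyS t), re_rot_mul_conj] at ht
    by_contra hc
    rw [if_pos (not_lt.1 hc)] at ht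
    exact one_ne_zero ht

lemma downJumps_subsingleton (hr : 0 ≤ r) : (downJumps m r).Subsingleton := by
  intro y hy z hz
  obtain ⟨hyre, hyim⟩ := re_eq_and_im_pos_of_mem_downJumps hr hy
  obtain ⟨hzre, hzim⟩ := re_eq_and_im_pos_of_mem_downJumps hr hz
  have hm : conj m ≠ 0 := by
    rintro h
    simp [h] at hyim
  rcases Complex.eq_or_eq_conj_of_norm_eq_of_re_eq
    (by rw [norm_mul_conj_of_mem_S1 hy.1, norm_mul_conj_of_mem_S1 hz.1])
    (hyre.trans hzre.symm) with h | h
  · exact mul_right_cancel₀ hm h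
  · have him := congrArg Complex.im h
    rw [Complex.conj_im] at him
    linarith

lemma ncard_bTrace_of_mem_downJumps (hr : 0 ≤ r) (hy : y ∈ downJumps m r) :
    (bTrace m r).ncard = 2 :=
  have h := re_eq_and_im_pos_of_mem_downJumps hr hy
  ncard_bTrace_eq_two hr ((mem_bTrace_iff hr).2 ⟨hy.1, h.1⟩) h.2.ne'

lemma card_filter_mem_downJumps_le (hr : 0 ≤ r) (J : Finset ℂ) :
    (J.filter (· ∈ downJumps m r)).card ≤ if (bTrace m r).ncard = 2 then 1 else 0 := by
  rcases (J.filter (· ∈ downJumps m r)).eq_empty_or_nonempty with h | ⟨y, hy⟩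
  · simp [h]
  rw [if_pos (ncard_bTrace_of_mem_downJumps hr (Finset.mem_filter.1 hy).2)]
  exact Finset.card_le_one.2 fun a ha b hb =>
    downJumps_subsingleton hr (Finset.mem_filter.1 ha).2 (Finset.mem_filter.1 hb).2

end Signals

lemma sub_rotLim_le_card_downJumps {n : ℕ} {v : Fin n → ℂ × ℝ} (hr : ∀ i, 0 ≤ (v i).2)
    {G : ℂ → ℕ} (hG : ProperlyUSC G) (hfin : {x ∈ S1 | Hsum v x ≠ G x}.Finite) {y : ℂ}
    (hy : y ∈ S1) :
    G y - rotLim (𝓝[>] 0) G y ≤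
      (Finset.univ.filter fun i => y ∈ downJumps (v i).1 (v i).2).card := by
  have hlim (l : Filter ℝ) (hl : l = 𝓝[>] 0 ∨ l = 𝓝[<] 0) :
      rotLim l G y = ∑ i, rotLim l (signal (v i).1 (v i).2) y := by
    have : l.NeBot := by rcases hl with rfl | rfl <;> infer_instance
    have hl' : l ≤ 𝓝[≠] 0 := by
      rcases hl with rfl | rfl
      exacts [nhdsWithin_mono _ fun _ ht => ne_of_gt ht, nhdsWithin_mono _ fun _ ht => ne_of_lt ht]
    exact rotLim_eq_of_finite_ne hfin hy hl'
      (eventually_Hsum_rot_eq fun i => exists_eventually_signal_rot_eq (hr i) hy hl)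
  have hjumps := Finset.univ.sum_le_sum_add_card_filter
    (f := fun i => rotLim (𝓝[>] 0) (signal (v i).1 (v i).2) y)
    (g := fun i => rotLim (𝓝[<] 0) (signal (v i).1 (v i).2) y)
    fun i _ => rotLim_le (signal_le_one _ _)
  have hfilter : (Finset.univ.filter fun i =>
      rotLim (𝓝[<] 0) (signal (v i).1 (v i).2) y = 1 ∧
        rotLim (𝓝[>] 0) (signal (v i).1 (v i).2) y = 0) =
      Finset.univ.filter fun i => y ∈ downJumps (v i).1 (v i).2 := by
    simp [downJumps, hy]
  rw [hG.eq_max_rotLim hy, hlim _ (.inl rfl), hlim _ (.inr rfl)]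
  rw [hfilter] at hjumps
  omega

section ProperlyUSC

variable {G : ℂ → ℕ}

lemma ProperlyUSC.eventually_le (hG : ProperlyUSC G) {x : ℂ} (hx : x ∈ S1) :
    ∀ᶠ z in 𝓝 x, z ∈ S1 → G z ≤ G x := by
  obtain ⟨a, b, ⟨δ₁, hδ₁, ha⟩, ⟨δ₂, hδ₂, hb⟩, hab⟩ := hG x hx
  filter_upwards [eventually_exists_rot_eq (ne_zero_of_mem_S1 hx) (lt_min hδ₁ hδ₂)]
    with z hz hzS
  obtain ⟨t, ht, rfl⟩ := hz (hzS.trans hx.symm)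
  rcases lt_trichotomy t 0 with h | rfl | h
  · rw [hb t (by linarith [ht.1, min_le_right δ₁ δ₂]) h, hab]
    exact le_max_right a b
  · rw [rot_zero]
  · rw [ha t h (by linarith [ht.2, min_le_left δ₁ δ₂]), hab]
    exact le_max_left a b

lemma ProperlyUSC.upperSemicontinuousOn (hG : ProperlyUSC G) : UpperSemicontinuousOn G S1 :=
  fun _ hx _ hc => eventually_nhdsWithin_iff.2 <|
    (hG.eventually_le hx).mono fun _ hz hzS => (hz hzS).trans_lt hc

lemma ProperlyUSC.isClosed_superlevel (hG : ProperlyUSC G) (k : ℕ) :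
    IsClosed (superlevel G k) :=
  (hG.upperSemicontinuousOn.isCompact_inter_preimage_Ici isCompact_S1 k).isClosed

lemma ProperlyUSC.exists_eq_maxOnS1 (hG : ProperlyUSC G) :
    ∃ x ∈ S1, G x = maxOnS1 G := by
  obtain ⟨x, hx, hmax⟩ :=
    hG.upperSemicontinuousOn.exists_isMaxOn (nonempty_of_mem one_mem_S1) isCompact_S1
  refine ⟨x, hx, (IsGreatest.csSup_eq (s := G '' S1) ⟨mem_image_of_mem G hx, ?_⟩).symm⟩
  rintro _ ⟨z, hz, rfl⟩
  exact hmax hz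

lemma ProperlyUSC.exists_rotLim_lt_mem_connectedComponentIn (hG : ProperlyUSC G) {k : ℕ}
    (hk : ∃ x ∈ S1, G x < k) {x : ℂ} (hx : x ∈ superlevel G k) :
    ∃ y ∈ connectedComponentIn (superlevel G k) x, rotLim (𝓝[>] 0) G y < k := by
  by_contra! hge
  -- `G ≥ k` just after each point of the component, so small positive rotations keep it inside
  have hfwd : ∀ y ∈ connectedComponentIn (superlevel G k) x,
      ∀ᶠ t in 𝓝[>] 0, rot t y ∈ connectedComponentIn (superlevel G k) x := by
    intro y hy
    have hyA := connectedComponentIn_subset _ _ hy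
    obtain ⟨a, -, ha, -⟩ := hG y hyA.1
    rw [connectedComponentIn_eq hy]
    refine eventually_rot_mem_connectedComponentIn hyA ?_
    filter_upwards [rightVal_iff.1 ha] with t ht
    exact ⟨rot_mem_S1 hyA.1 t, ht ▸ rotLim_eq (rightVal_iff.1 ha) ▸ hge y hy⟩
  obtain ⟨x₀, hx₀, hlt⟩ := hk
  have hsub := S1_subset_of_forall_eventually_rot_mem
    (isClosed_connectedComponentIn (hG.isClosed_superlevel k) x) (mem_connectedComponentIn hx)
    hx.1 hfwd
  exact (connectedComponentIn_subset _ _ (hsub hx₀)).2.not_gt hlt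

theorem ProperlyUSC.maxOnS1_sub_minOnS1_add_tau_le (hG : ProperlyUSC G)
    (J : Finset ℂ) (hJ : ∀ y ∈ S1, rotLim (𝓝[>] 0) G y < G y → y ∈ J) :
    maxOnS1 G - minOnS1 G + tau G ≤ ∑ y ∈ J, (G y - rotLim (𝓝[>] 0) G y) := by
  obtain ⟨xM, hxM, hM⟩ := hG.exists_eq_maxOnS1
  obtain ⟨xm, hxm, hm⟩ := exists_eq_minOnS1 G
  set K := Finset.Icc (minOnS1 G + 1) (maxOnS1 G)
  let drops (k : ℕ) (y : ℂ) : Prop := rotLim (𝓝[>] 0) G y < k ∧ k ≤ G y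
  have hlevel (k : ℕ) (hk : k ∈ K) :
      numCC (superlevel G k) ≤ (J.filter (drops k)).card ∧ 0 < (J.filter (drops k)).card := by
    rw [Finset.mem_Icc] at hk
    have hcomp : ∀ x ∈ superlevel G k, ∃ y ∈ J.filter (drops k),
        y ∈ connectedComponentIn (superlevel G k) x := by
      intro x hx
      obtain ⟨y, hyC, hy⟩ :=
        hG.exists_rotLim_lt_mem_connectedComponentIn (k := k) ⟨xm, hxm, by omega⟩ hx
      have hyA := connectedComponentIn_subset _ _ hyC
      exact ⟨y, Finset.mem_filter.2 ⟨hJ y hyA.1 (hy.trans_le hyA.2), hy, hyA.2⟩, hyC⟩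
    obtain ⟨y, hy, -⟩ := hcomp xM ⟨hxM, by omega⟩
    exact ⟨card_connectedComponents_le _ hcomp, Finset.card_pos.2 ⟨y, hy⟩⟩
  calc maxOnS1 G - minOnS1 G + tau G
      = ∑ k ∈ K, (1 + (numCC (superlevel G k) - 1)) := by
        have hK : K.card = maxOnS1 G - minOnS1 G := by
          rw [Nat.card_Icc]
          omega
        rw [Finset.sum_add_distrib, ← Finset.card_eq_sum_ones, hK, tau]
    _ ≤ ∑ k ∈ K, (J.filter (drops k)).card :=
        Finset.sum_le_sum fun k hk => by have := hlevel k hk; omega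
    _ = ∑ y ∈ J, (K.filter fun k => drops k y).card :=
        Finset.sum_card_bipartiteAbove_eq_sum_card_bipartiteBelow _
    _ ≤ ∑ y ∈ J, (G y - rotLim (𝓝[>] 0) G y) := by
        refine Finset.sum_le_sum fun y _ => ?_
        rw [← Nat.card_Ioc]
        exact Finset.card_le_card fun k hk => Finset.mem_Ioc.2 (Finset.mem_filter.1 hk).2

end ProperlyUSC

/-- any decomposition of a function equal, off a finite set, to a
properly u.s.c. `G` has at least `G* − G_* + τ(G)` signals whose boundary trace
has exactly two elements. -/
theorem stmt10 {n : ℕ} (v : Fin n → ℂ × ℝ) (hr : ∀ i, 0 < (v i).2)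
    (G : ℂ → ℕ) (hG : ProperlyUSC G)
    (hfin : {x ∈ S1 | Hsum v x ≠ G x}.Finite) :
    maxOnS1 G - minOnS1 G + tau G
      ≤ Nat.card {i : Fin n // (bTrace (v i).1 (v i).2).ncard = 2} := by
  have hr' i := (hr i).le
  let D (i : Fin n) := downJumps (v i).1 (v i).2
  have hDfin : (⋃ i, D i).Finite := finite_iUnion fun i => (downJumps_subsingleton (hr' i)).finite
  set J := hDfin.toFinset
  have hjump {y} (hy : y ∈ S1) := sub_rotLim_le_card_downJumps hr' hG hfin hy
  calc maxOnS1 G - minOnS1 G + tau G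
      ≤ ∑ y ∈ J, (G y - rotLim (𝓝[>] 0) G y) := by
        refine hG.maxOnS1_sub_minOnS1_add_tau_le J fun y hy hlt => ?_
        obtain ⟨i, hi⟩ := Finset.card_pos.1 ((Nat.sub_pos_of_lt hlt).trans_le (hjump hy))
        exact hDfin.mem_toFinset.2 (mem_iUnion.2 ⟨i, (Finset.mem_filter.1 hi).2⟩)
    _ ≤ ∑ y ∈ J, (Finset.univ.filter fun i => y ∈ D i).card := by
        refine Finset.sum_le_sum fun y hy => hjump ?_
        obtain ⟨i, hi⟩ := mem_iUnion.1 (hDfin.mem_toFinset.1 hy)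
        exact hi.1
    _ = ∑ i, (J.filter (· ∈ D i)).card :=
        Finset.sum_card_bipartiteAbove_eq_sum_card_bipartiteBelow _
    _ ≤ ∑ i, if (bTrace (v i).1 (v i).2).ncard = 2 then 1 else 0 :=
        Finset.sum_le_sum fun i _ => card_filter_mem_downJumps_le (hr' i) J
    _ = Nat.card {i : Fin n // (bTrace (v i).1 (v i).2).ncard = 2} := by
        rw [Nat.card_eq_fintype_card, Fintype.card_subtype, Finset.card_filter]
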